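/- For the Dunkl–Darboux III Hamiltonian Ĥ^{(λ)} = (1 + λx̂²)^{-1}(π̂²/2 + ω²x̂²/2), the deformed Demkov–Fradkin operators F̂_{ij}^{(λ)} = π̂ᵢπ̂ⱼ + x̂ᵢx̂ⱼ(ω² − 2λĤ^{(λ)}) satisfy [Ĥ^{(λ)}, F̂_{ij}^{(λ)}] = 0 and Ĥ^{(λ)} = (1/2)Σᵢ F̂_{ii}^{(λ)}. -/

import Mathlib

open Complex BigOperators Finset

noncomputable section

variable {N : ℕ}

/-- Reflection of the `i`-th coordinate: `σᵢ(x)` flips the sign of `xᵢ`. -/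
def flipC (i : Fin N) (x : Fin N → ℝ) : Fin N → ℝ := Function.update x i (-(x i))

/-- The reflection operator `R̂ᵢ f (x) = f (σᵢ x)`. -/
def Rop (i : Fin N) (f : (Fin N → ℝ) → ℂ) : (Fin N → ℝ) → ℂ := fun x => f (flipC i x)

/-- The Dunkl derivative `Dᵢ f (x) = ∂ᵢ f(x) + (μᵢ/xᵢ)(f(x) - f(σᵢ x))`. -/
def Dop (μ : Fin N → ℝ) (i : Fin N) (f : (Fin N → ℝ) → ℂ) : (Fin N → ℝ) → ℂ :=
  fun x => fderiv ℝ f x (Pi.single i 1) + ((μ i : ℂ) / (x i : ℂ)) * (f x - f (flipC i x))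

/-- The Dunkl momentum operator `π̂ᵢ = -iℏ Dᵢ`. -/
def Pop (μ : Fin N → ℝ) (hb : ℝ) (i : Fin N) (f : (Fin N → ℝ) → ℂ) : (Fin N → ℝ) → ℂ :=
  fun x => -(Complex.I * (hb : ℂ)) * Dop μ i f x

/-- The Dunkl angular momentum operator `Λ̂ᵢⱼ = x̂ᵢ π̂ⱼ - x̂ⱼ π̂ᵢ`. -/
def Lam (μ : Fin N → ℝ) (hb : ℝ) (i j : Fin N) (f : (Fin N → ℝ) → ℂ) : (Fin N → ℝ) → ℂ :=
  fun x => (x i : ℂ) * Pop μ hb j f x - (x j : ℂ) * Pop μ hb i f x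

/-- The complement of the coordinate hyperplanes in `ℝ^N`. -/
def Udom (N : ℕ) : Set (Fin N → ℝ) := {x | ∀ i, x i ≠ 0}

/-- The Dunkl–Darboux III Hamiltonian `Ĥ^{(λ)} = (1 + λx̂²)⁻¹(π̂²/2 + ω²x̂²/2)`. -/
def Hdar (μ : Fin N → ℝ) (hb lam ω : ℝ) (f : (Fin N → ℝ) → ℂ) : (Fin N → ℝ) → ℂ :=
  fun x => (1 / (1 + (lam : ℂ) * ∑ i, (x i : ℂ) ^ 2)) *
    ((1 / 2 : ℂ) * ∑ i, Pop μ hb i (Pop μ hb i f) x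
      + (ω : ℂ) ^ 2 / 2 * (∑ i, (x i : ℂ) ^ 2) * f x)

/-- The deformed Demkov–Fradkin operators
`F̂ᵢⱼ^{(λ)} = π̂ᵢπ̂ⱼ + x̂ᵢx̂ⱼ(ω² - 2λĤ^{(λ)})`. -/
def DFdar (μ : Fin N → ℝ) (hb lam ω : ℝ) (i j : Fin N)
    (f : (Fin N → ℝ) → ℂ) : (Fin N → ℝ) → ℂ :=
  fun x => Pop μ hb i (Pop μ hb j f) x
    + (x i : ℂ) * (x j : ℂ) * ((ω : ℂ) ^ 2 * f x - 2 * (lam : ℂ) * Hdar μ hb lam ω f x)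

-- domain
def DD (lam : ℝ) (N : ℕ) : Set (Fin N → ℝ) :=
  {x | (∀ i, x i ≠ 0) ∧ 1 + lam * ∑ i, (x i) ^ 2 ≠ 0}

lemma isOpen_DD (lam : ℝ) : IsOpen (DD lam N) := by
  have h1 : IsOpen {x : Fin N → ℝ | ∀ i, x i ≠ 0} := by
    have : {x : Fin N → ℝ | ∀ i, x i ≠ 0} = ⋂ i, {x | x i ≠ 0} := by
      ext x; simp
    rw [this]
    exact isOpen_iInter_of_finite fun i =>
      isOpen_ne.preimage (continuous_apply i)
  have h2 : IsOpen {x : Fin N → ℝ | 1 + lam * ∑ i, (x i) ^ 2 ≠ 0} := by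
    apply isOpen_ne.preimage
    continuity
  exact (h1.inter h2 : _)

lemma flipC_apply (i : Fin N) (x : Fin N → ℝ) (j : Fin N) :
    flipC i x j = if j = i then -(x i) else x j := by
  unfold flipC Function.update
  by_cases h : j = i <;> simp [h]

def flipL (i : Fin N) : (Fin N → ℝ) →L[ℝ] (Fin N → ℝ) :=
  LinearMap.toContinuousLinearMap
  { toFun := fun x => flipC i x
    map_add' := by
      intro a b; funext j
      by_cases h : j = i <;> simp [flipC_apply, h] <;> ring
    map_smul' := by
      intro c a; funext j
      by_cases h : j = i <;> simp [flipC_apply, h] <;> ring }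

lemma flipL_apply (i : Fin N) (x : Fin N → ℝ) : flipL i x = flipC i x := rfl

lemma flipC_flipC (i : Fin N) (x : Fin N → ℝ) : flipC i (flipC i x) = x := by
  funext j; simp only [flipC_apply]
  by_cases h : j = i <;> simp [h]

lemma sum_sq_flipC (i : Fin N) (x : Fin N → ℝ) :
    ∑ j, (flipC i x j) ^ 2 = ∑ j, (x j) ^ 2 := by
  apply Finset.sum_congr rfl
  intro j _
  rw [flipC_apply]
  by_cases h : j = i <;> simp [h]

lemma flipC_mem_DD {lam : ℝ} {x : Fin N → ℝ} (i : Fin N) (hx : x ∈ DD lam N) :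
    flipC i x ∈ DD lam N := by
  obtain ⟨h1, h2⟩ := hx
  constructor
  · intro j; rw [flipC_apply]
    by_cases h : j = i <;> simp [h, h1 i, h1 j]
  · rwa [sum_sq_flipC]

lemma flipL_single (i j : Fin N) :
    flipL i (Pi.single j (1:ℝ)) = (if j = i then (-1:ℝ) else 1) • (Pi.single j 1 : Fin N → ℝ) := by
  rw [flipL_apply]
  funext k
  rw [flipC_apply]
  by_cases hk : k = i
  · subst hk
    by_cases hj : j = k <;> simp [hj, Pi.single_apply]
  · by_cases hj : j = i <;>
      simp [hj, hk, Pi.single_apply, Ne.symm hk]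


-- appended to base
variable {lam : ℝ}

def pdO (i : Fin N) (f : (Fin N → ℝ) → ℂ) : (Fin N → ℝ) → ℂ :=
  fun x => fderiv ℝ f x (Pi.single i 1)

def Sm (lam : ℝ) (f : (Fin N → ℝ) → ℂ) : Prop := ContDiffOn ℝ (⊤ : ℕ∞) f (DD lam N)

namespace Sm

lemma diffAt {f : (Fin N → ℝ) → ℂ} (hf : Sm lam f) {x : Fin N → ℝ}
    (hx : x ∈ DD lam N) : DifferentiableAt ℝ f x :=
  (hf.contDiffAt ((isOpen_DD lam).mem_nhds hx)).differentiableAt (by simp)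

lemma add {f g} (hf : Sm lam f) (hg : Sm lam g) : Sm (N := N) lam (fun x => f x + g x) := ContDiffOn.add hf hg
lemma sub {f g} (hf : Sm lam f) (hg : Sm lam g) : Sm (N := N) lam (fun x => f x - g x) := ContDiffOn.sub hf hg
lemma mul {f g} (hf : Sm lam f) (hg : Sm lam g) : Sm (N := N) lam (fun x => f x * g x) := ContDiffOn.mul hf hg
lemma const (c : ℂ) : Sm (N := N) lam (fun _ => c) := contDiffOn_const
lemma const_mul {f} (hf : Sm lam f) (c : ℂ) : Sm (N := N) lam (fun x => c * f x) :=
  (const c).mul hf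
lemma sum {s : Finset (Fin N)} {F : Fin N → ((Fin N → ℝ) → ℂ)}
    (hF : ∀ k ∈ s, Sm lam (F k)) : Sm (N := N) lam (fun x => ∑ k ∈ s, F k x) := by
  classical
  induction s using Finset.induction with
  | empty => simpa using const 0
  | insert a s' hns ih =>
    have : (fun x => ∑ k ∈ insert a s', F k x) = fun x => F a x + ∑ k ∈ s', F k x := by
      funext x; rw [Finset.sum_insert hns]
    rw [this]
    exact (hF a (Finset.mem_insert_self a s')).add
      (ih fun k hk => hF k (Finset.mem_insert_of_mem hk))

lemma coord (i : Fin N) : Sm (N := N) lam (fun x => (x i : ℂ)) := by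
  have : ContDiff ℝ (⊤ : ℕ∞) (fun x : Fin N → ℝ => (x i : ℂ)) :=
    Complex.ofRealCLM.contDiff.comp (contDiff_apply ℝ ℝ i)
  exact this.contDiffOn

lemma R {f} (hf : Sm lam f) (i : Fin N) : Sm (N := N) lam (Rop i f) := by
  have h1 : ContDiff ℝ (⊤ : ℕ∞) (flipL i : (Fin N → ℝ) → (Fin N → ℝ)) := (flipL i).contDiff
  have : Rop i f = f ∘ (flipL i) := rfl
  rw [this]
  exact ContDiffOn.comp hf h1.contDiffOn (fun x hx => flipC_mem_DD i hx)

lemma invcoord (i : Fin N) : Sm (N := N) lam (fun x => ((x i : ℂ))⁻¹) := by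
  apply ContDiffOn.inv (coord i)
  intro x hx
  exact_mod_cast Complex.ofReal_ne_zero.mpr (hx.1 i)

lemma pd {f} (hf : Sm lam f) (i : Fin N) : Sm (N := N) lam (pdO i f) := by
  have h1 : ContDiffOn ℝ (⊤ : ℕ∞) (fderiv ℝ f) (DD lam N) :=
    hf.fderiv_of_isOpen (isOpen_DD lam) (by simp)
  exact h1.clm_apply contDiffOn_const

lemma D {f} (hf : Sm lam f) (μ : Fin N → ℝ) (i : Fin N) : Sm (N := N) lam (Dop μ i f) := by
  have : Dop μ i f = fun x =>
      pdO i f x + ((μ i : ℂ) * ((x i : ℂ))⁻¹) * (f x - Rop i f x) := by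
    funext x; simp [Dop, pdO, Rop, div_eq_mul_inv]
  rw [this]
  exact (hf.pd i).add ((((const _).mul (invcoord i))).mul (hf.sub (hf.R i)))

end Sm

-- pointwise layer
section PT
variable {lam : ℝ} {μ : Fin N → ℝ}

lemma mem_nhds_DD {x : Fin N → ℝ} (hx : x ∈ DD lam N) : DD lam N ∈ nhds x :=
  (isOpen_DD lam).mem_nhds hx

lemma pd_congr {f g : (Fin N → ℝ) → ℂ} (h : Set.EqOn f g (DD lam N))
    {x : Fin N → ℝ} (hx : x ∈ DD lam N) (i : Fin N) : pdO i f x = pdO i g x := by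
  unfold pdO
  rw [Filter.EventuallyEq.fderiv_eq (Filter.eventuallyEq_of_mem (mem_nhds_DD hx) h)]

lemma Dop_congr {f g : (Fin N → ℝ) → ℂ} (h : Set.EqOn f g (DD lam N))
    {x : Fin N → ℝ} (hx : x ∈ DD lam N) (i : Fin N) : Dop μ i f x = Dop μ i g x := by
  unfold Dop
  rw [show fderiv ℝ f x = fderiv ℝ g x from
    Filter.EventuallyEq.fderiv_eq (Filter.eventuallyEq_of_mem (mem_nhds_DD hx) h),
    h hx, h (flipC_mem_DD i hx)]

lemma pd_add {f g : (Fin N → ℝ) → ℂ} {x : Fin N → ℝ} (hf : DifferentiableAt ℝ f x)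
    (hg : DifferentiableAt ℝ g x) (i : Fin N) :
    pdO i (fun y => f y + g y) x = pdO i f x + pdO i g x := by
  unfold pdO; rw [fderiv_fun_add hf hg]; rfl

lemma pd_const_mul {f : (Fin N → ℝ) → ℂ} {x : Fin N → ℝ} (hf : DifferentiableAt ℝ f x)
    (c : ℂ) (i : Fin N) : pdO i (fun y => c * f y) x = c * pdO i f x := by
  unfold pdO; rw [fderiv_const_mul hf]; rfl

lemma pd_mul {f g : (Fin N → ℝ) → ℂ} {x : Fin N → ℝ} (hf : DifferentiableAt ℝ f x)
    (hg : DifferentiableAt ℝ g x) (i : Fin N) :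
    pdO i (fun y => f y * g y) x = pdO i f x * g x + f x * pdO i g x := by
  unfold pdO; rw [fderiv_fun_mul hf hg]; simp; ring

lemma pd_sum {s : Finset (Fin N)} {F : Fin N → ((Fin N → ℝ) → ℂ)} {x : Fin N → ℝ}
    (hF : ∀ k ∈ s, DifferentiableAt ℝ (F k) x) (i : Fin N) :
    pdO i (fun y => ∑ k ∈ s, F k y) x = ∑ k ∈ s, pdO i (F k) x := by
  classical
  induction s using Finset.induction with
  | empty => simp [pdO]
  | insert a s' hns ih =>
    have h1 : DifferentiableAt ℝ (fun y => ∑ k ∈ s', F k y) x := by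
      apply DifferentiableAt.fun_sum
      intro k hk; exact hF k (Finset.mem_insert_of_mem hk)
    rw [Finset.sum_insert hns,
      show (fun y => ∑ k ∈ insert a s', F k y) = fun y => F a y + ∑ k ∈ s', F k y by
        funext y; rw [Finset.sum_insert hns],
      pd_add (hF a (Finset.mem_insert_self a s')) h1,
      ih fun k hk => hF k (Finset.mem_insert_of_mem hk)]

lemma pd_const (c : ℂ) (x : Fin N → ℝ) (i : Fin N) : pdO i (fun _ => c) x = 0 := by
  simp [pdO]

lemma pd_coord (i k : Fin N) (x : Fin N → ℝ) :
    pdO k (fun y => (y i : ℂ)) x = if i = k then 1 else 0 := by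
  have : (fun y : Fin N → ℝ => (y i : ℂ))
      = fun y => Complex.ofRealCLM ((ContinuousLinearMap.proj i : (Fin N → ℝ) →L[ℝ] ℝ) y) :=
    rfl
  unfold pdO
  rw [this]
  rw [show (fun y => Complex.ofRealCLM ((ContinuousLinearMap.proj i : (Fin N → ℝ) →L[ℝ] ℝ) y))
      = (Complex.ofRealCLM ∘ (ContinuousLinearMap.proj i : (Fin N → ℝ) →L[ℝ] ℝ)) from rfl,
    fderiv_comp x Complex.ofRealCLM.differentiableAt
      (ContinuousLinearMap.proj i).differentiableAt]
  simp [ContinuousLinearMap.fderiv, Pi.single_apply]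
  split <;> simp

lemma pd_R {f : (Fin N → ℝ) → ℂ} {x : Fin N → ℝ}
    (hf : DifferentiableAt ℝ f (flipC i x)) (k : Fin N) :
    pdO k (Rop i f) x = (if k = i then (-1:ℂ) else 1) * pdO k f (flipC i x) := by
  have h1 : Rop i f = f ∘ (flipL i) := rfl
  unfold pdO
  rw [h1, fderiv_comp x (by rwa [flipL_apply]) (flipL i).differentiableAt]
  simp only [ContinuousLinearMap.fderiv, ContinuousLinearMap.coe_comp', Function.comp_apply]
  rw [flipL_single, flipL_apply]
  by_cases h : k = i <;> simp [h]

end PT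

section DOPL
variable {lam : ℝ} {μ : Fin N → ℝ}

lemma flipC_comm {i j : Fin N} (hij : i ≠ j) (x : Fin N → ℝ) :
    flipC i (flipC j x) = flipC j (flipC i x) := by
  funext k
  simp only [flipC_apply]
  by_cases hki : k = i <;> by_cases hkj : k = j <;>
    simp [hki, hkj, hij, hij.symm, Ne.symm hij]

lemma coordC_flipC (i j : Fin N) (x : Fin N → ℝ) :
    ((flipC i x) j : ℂ) = (if j = i then (-1:ℂ) else 1) * (x j : ℂ) := by
  rw [flipC_apply]
  by_cases h : j = i <;> simp [h]

lemma Dop_apply (f : (Fin N → ℝ) → ℂ) (i : Fin N) (x : Fin N → ℝ) :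
    Dop μ i f x = pdO i f x + ((μ i : ℂ) / (x i : ℂ)) * (f x - Rop i f x) := rfl

lemma Dop_add {f g : (Fin N → ℝ) → ℂ} {x : Fin N → ℝ}
    (hf : DifferentiableAt ℝ f x) (hg : DifferentiableAt ℝ g x) (i : Fin N) :
    Dop μ i (fun y => f y + g y) x = Dop μ i f x + Dop μ i g x := by
  simp only [Dop, Rop]
  rw [show fderiv ℝ (fun y => f y + g y) x (Pi.single i 1)
      = pdO i (fun y => f y + g y) x from rfl, pd_add hf hg]
  simp only [pdO]; ring

lemma Dop_sub {f g : (Fin N → ℝ) → ℂ} {x : Fin N → ℝ}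
    (hf : DifferentiableAt ℝ f x) (hg : DifferentiableAt ℝ g x) (i : Fin N) :
    Dop μ i (fun y => f y - g y) x = Dop μ i f x - Dop μ i g x := by
  simp only [Dop, Rop]
  rw [show fderiv ℝ (fun y => f y - g y) x (Pi.single i 1)
      = pdO i (fun y => f y - g y) x from rfl,
    show (fun y => f y - g y) = (fun y => f y + (-1) * g y) by funext y; ring,
    pd_add hf (hg.const_mul _), pd_const_mul hg]
  simp only [pdO]; ring

lemma Dop_const_mul {f : (Fin N → ℝ) → ℂ} {x : Fin N → ℝ}
    (hf : DifferentiableAt ℝ f x) (c : ℂ) (i : Fin N) :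
    Dop μ i (fun y => c * f y) x = c * Dop μ i f x := by
  simp only [Dop, Rop]
  rw [show fderiv ℝ (fun y => c * f y) x (Pi.single i 1)
      = pdO i (fun y => c * f y) x from rfl, pd_const_mul hf]
  simp only [pdO]; ring

lemma Dop_sum {s : Finset (Fin N)} {F : Fin N → ((Fin N → ℝ) → ℂ)} {x : Fin N → ℝ}
    (hF : ∀ k ∈ s, DifferentiableAt ℝ (F k) x) (i : Fin N) :
    Dop μ i (fun y => ∑ k ∈ s, F k y) x = ∑ k ∈ s, Dop μ i (F k) x := by
  simp only [Dop, Rop]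
  rw [show fderiv ℝ (fun y => ∑ k ∈ s, F k y) x (Pi.single i 1)
      = pdO i (fun y => ∑ k ∈ s, F k y) x from rfl, pd_sum hF]
  rw [Finset.sum_add_distrib, ← Finset.mul_sum, ← Finset.sum_sub_distrib]
  simp only [pdO]

lemma Dop_mul {f g : (Fin N → ℝ) → ℂ} {x : Fin N → ℝ}
    (hf : DifferentiableAt ℝ f x) (hg : DifferentiableAt ℝ g x) (i : Fin N) :
    Dop μ i (fun y => f y * g y) x = pdO i f x * g x + f x * Dop μ i g x
      + ((μ i : ℂ) / (x i : ℂ)) * (f x - Rop i f x) * Rop i g x := by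
  simp only [Dop, Rop]
  rw [show fderiv ℝ (fun y => f y * g y) x (Pi.single i 1)
      = pdO i (fun y => f y * g y) x from rfl, pd_mul hf hg]
  simp only [pdO, Rop]; ring

lemma Dop_even_mul {f g : (Fin N → ℝ) → ℂ} {x : Fin N → ℝ}
    (hf : DifferentiableAt ℝ f x) (hg : DifferentiableAt ℝ g x) (i : Fin N)
    (hev : f (flipC i x) = f x) :
    Dop μ i (fun y => f y * g y) x = pdO i f x * g x + f x * Dop μ i g x := by
  rw [Dop_mul hf hg, Rop, hev]; ring

lemma pd_inv_coord {x : Fin N → ℝ} (hx : x ∈ DD lam N) (i j : Fin N) :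
    pdO i (fun y => ((y j : ℂ))⁻¹) x
      = -(if j = i then 1 else 0) * (((x j : ℂ))⁻¹) ^ 2 := by
  have hxj : ((x j : ℂ)) ≠ 0 := by exact_mod_cast Complex.ofReal_ne_zero.mpr (hx.1 j)
  have hq : DifferentiableAt ℝ (fun y : Fin N → ℝ => ((y j : ℂ))⁻¹) x :=
    ((Sm.invcoord (lam := lam) j).contDiffAt (mem_nhds_DD hx)).differentiableAt (by simp)
  have hc : DifferentiableAt ℝ (fun y : Fin N → ℝ => (y j : ℂ)) x :=
    ((Sm.coord (lam := lam) j).contDiffAt (mem_nhds_DD hx)).differentiableAt (by simp)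
  have key : Set.EqOn (fun y : Fin N → ℝ => (y j : ℂ) * ((y j : ℂ))⁻¹) (fun _ => (1:ℂ))
      (DD lam N) := by
    intro y hy
    have : ((y j : ℂ)) ≠ 0 := by exact_mod_cast Complex.ofReal_ne_zero.mpr (hy.1 j)
    simp [mul_inv_cancel₀ this]
  have h0 : pdO i (fun y : Fin N → ℝ => (y j : ℂ) * ((y j : ℂ))⁻¹) x = 0 := by
    rw [pd_congr key hx i, pd_const]
  rw [pd_mul hc hq, pd_coord] at h0
  have := h0
  clear h0
  by_cases h : j = i
  · subst h
    rw [if_pos rfl, one_mul] at this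
    rw [if_pos rfl]
    have h2 : (x j : ℂ) * pdO j (fun y => ((y j : ℂ))⁻¹) x = -((x j : ℂ))⁻¹ := by
      linear_combination this
    apply mul_left_cancel₀ hxj
    rw [h2]
    field_simp
  · simp only [if_neg h, zero_mul, zero_add] at this ⊢
    rcases mul_eq_zero.mp this with h1 | h1
    · exact absurd h1 hxj
    · rw [h1]; ring

lemma Dop_coord_mul {g : (Fin N → ℝ) → ℂ} {x : Fin N → ℝ} (hx : x ∈ DD lam N)
    (hg : DifferentiableAt ℝ g x) (i j : Fin N) :
    Dop μ i (fun y => (y j : ℂ) * g y) x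
      = (x j : ℂ) * Dop μ i g x
        + (if i = j then g x + 2 * (μ i : ℂ) * Rop i g x else 0) := by
  have hc : DifferentiableAt ℝ (fun y : Fin N → ℝ => (y j : ℂ)) x :=
    ((Sm.coord (lam := lam) j).contDiffAt (mem_nhds_DD hx)).differentiableAt (by simp)
  have hxi : ((x i : ℂ)) ≠ 0 := by exact_mod_cast Complex.ofReal_ne_zero.mpr (hx.1 i)
  rw [Dop_mul hc hg, pd_coord]
  rw [show Rop i (fun y => (y j : ℂ)) x = ((flipC i x) j : ℂ) from rfl, coordC_flipC]
  by_cases h : i = j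
  · subst h
    simp only [if_pos rfl, if_true]
    field_simp
    ring
  · simp only [if_neg h, if_neg (Ne.symm h)]
    ring

lemma Dop_R {f : (Fin N → ℝ) → ℂ} {x : Fin N → ℝ} (hx : x ∈ DD lam N)
    (hf : Sm lam f) (i j : Fin N) :
    Dop μ i (Rop j f) x = (if i = j then (-1:ℂ) else 1) * Rop j (Dop μ i f) x := by
  have hfd : DifferentiableAt ℝ f (flipC j x) := hf.diffAt (flipC_mem_DD j hx)
  rw [Dop_apply, pd_R hfd]
  by_cases h : i = j
  · subst h
    simp only [if_pos rfl]
    rw [show Rop i f x = f (flipC i x) from rfl,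
      show Rop i (Rop i f) x = f (flipC i (flipC i x)) from rfl, flipC_flipC]
    rw [show Rop i (Dop μ i f) x = Dop μ i f (flipC i x) from rfl, Dop_apply]
    rw [show Rop i f (flipC i x) = f (flipC i (flipC i x)) from rfl, flipC_flipC]
    rw [coordC_flipC]
    simp only [if_pos rfl]
    have hxi : ((x i : ℂ)) ≠ 0 := by exact_mod_cast Complex.ofReal_ne_zero.mpr (hx.1 i)
    field_simp
  · simp only [if_neg h, one_mul]
    have h1 : flipC i (flipC j x) = flipC j (flipC i x) := flipC_comm h x
    have h2 : (flipC j x) i = x i := by rw [flipC_apply]; simp [h]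
    simp only [Rop, Dop_apply, pdO, h2]
    rw [h1]

end DOPL

section COMM
variable {lam : ℝ} {μ : Fin N → ℝ}

lemma pd_pd_comm {f : (Fin N → ℝ) → ℂ} (hf : Sm lam f) {x : Fin N → ℝ}
    (hx : x ∈ DD lam N) (i j : Fin N) :
    pdO i (pdO j f) x = pdO j (pdO i f) x := by
  have hfd : ContDiffAt ℝ (⊤ : ℕ∞) f x := hf.contDiffAt (mem_nhds_DD hx)
  have hsymm := hfd.isSymmSndFDerivAt (by rw [minSmoothness_of_isRCLikeNormedField]; exact WithTop.coe_le_coe.mpr le_top)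
  have hdf : DifferentiableAt ℝ (fderiv ℝ f) x :=
    ((hf.fderiv_of_isOpen (m := 1) (isOpen_DD lam) (by exact WithTop.coe_le_coe.mpr le_top)).contDiffAt
      (mem_nhds_DD hx)).differentiableAt one_ne_zero
  have e : ∀ v w : Fin N → ℝ,
      fderiv ℝ (fun y => fderiv ℝ f y v) x w = fderiv ℝ (fderiv ℝ f) x w v := by
    intro v w
    rw [fderiv_clm_apply hdf (differentiableAt_const v)]
    simp
  unfold pdO
  rw [e, e, hsymm]

lemma Dop_Dop_ne {f : (Fin N → ℝ) → ℂ} (hf : Sm lam f) {x : Fin N → ℝ}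
    (hx : x ∈ DD lam N) {i j : Fin N} (hij : i ≠ j) :
    Dop μ i (Dop μ j f) x
      = pdO i (pdO j f) x
        + ((μ i : ℂ)/(x i : ℂ)) * (pdO j f x - pdO j f (flipC i x))
        + ((μ j : ℂ)/(x j : ℂ)) * (pdO i f x - pdO i f (flipC j x))
        + ((μ i : ℂ)/(x i : ℂ)) * ((μ j : ℂ)/(x j : ℂ)) *
            (f x - f (flipC i x) - f (flipC j x) + f (flipC j (flipC i x))) := by
  have hxmem := hx
  set g : (Fin N → ℝ) → ℂ := fun y => (μ j : ℂ) * ((y j : ℂ))⁻¹ with hg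
  set h : (Fin N → ℝ) → ℂ := fun y => f y - Rop j f y with hh
  have hgS : Sm lam g := Sm.const_mul (Sm.invcoord j) _
  have hhS : Sm lam h := hf.sub (hf.R j)
  have hDj : Dop μ j f = fun y => pdO j f y + g y * h y := by
    funext y; simp only [Dop_apply, hg, hh, div_eq_mul_inv]
  have hpdS : Sm lam (pdO j f) := hf.pd j
  have hfi : DifferentiableAt ℝ f x := hf.diffAt hx
  have hfij : DifferentiableAt ℝ f (flipC i x) := hf.diffAt (flipC_mem_DD i hx)
  have hfjj : DifferentiableAt ℝ f (flipC j x) := hf.diffAt (flipC_mem_DD j hx)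
  -- expand outer Dop over the sum
  rw [hDj, Dop_add (hpdS.diffAt hx) ((hgS.mul hhS).diffAt hx)]
  rw [Dop_apply, Dop_mul (hgS.diffAt hx) (hhS.diffAt hx)]
  -- pdO i g x = 0
  have hpg : pdO i g x = 0 := by
    rw [hg, pd_const_mul (((Sm.invcoord (lam := lam) j)).diffAt hx), pd_inv_coord hx]
    simp [Ne.symm hij]
  -- g x and Rop i g x
  have hRg : Rop i g x = g x := by
    simp only [Rop, hg]
    rw [show (flipC i x) j = x j by rw [flipC_apply]; simp [Ne.symm hij]]
  -- Dop i h x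
  have hDh : Dop μ i h x = Dop μ i f x - Rop j (Dop μ i f) x := by
    have : Dop μ i h x = Dop μ i f x - Dop μ i (Rop j f) x := by
      rw [hh]
      exact Dop_sub hfi ((hf.R j).diffAt hx) i
    rw [this, Dop_R hx hf i j, if_neg hij, one_mul]
  rw [hpg, hRg, hDh]
  -- expand the remaining pieces
  have hji : ¬ j = i := Ne.symm hij
  have hxiflip : (flipC j x) i = x i := by rw [flipC_apply]; simp [hij]
  simp only [Rop, hh, hg, Dop_apply, Rop, pdO, flipC_flipC, hxiflip]
  rw [flipC_comm hij x]
  push_cast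
  ring
end COMM

section COMM2
variable {lam : ℝ} {μ : Fin N → ℝ}

lemma Dop_comm {f : (Fin N → ℝ) → ℂ} (hf : Sm lam f) {x : Fin N → ℝ}
    (hx : x ∈ DD lam N) (i j : Fin N) :
    Dop μ i (Dop μ j f) x = Dop μ j (Dop μ i f) x := by
  rcases eq_or_ne i j with rfl | hij
  · rfl
  rw [Dop_Dop_ne hf hx hij, Dop_Dop_ne hf hx hij.symm,
    pd_pd_comm hf hx, flipC_comm hij.symm x]
  ring

-- The "Dunkl Laplacian"-type operator (sum of squares of Dunkl derivatives).
def TDop (μ : Fin N → ℝ) (f : (Fin N → ℝ) → ℂ) : (Fin N → ℝ) → ℂ :=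
  fun x => ∑ k, Dop μ k (Dop μ k f) x

lemma Sm.T {f : (Fin N → ℝ) → ℂ} (hf : Sm lam f) (μ : Fin N → ℝ) :
    Sm (N := N) lam (TDop μ f) :=
  Sm.sum fun k _ => (hf.D μ k).D μ k

lemma Top_congr {f g : (Fin N → ℝ) → ℂ} (h : Set.EqOn f g (DD lam N))
    {x : Fin N → ℝ} (hx : x ∈ DD lam N) : TDop μ f x = TDop μ g x := by
  unfold TDop
  apply Finset.sum_congr rfl
  intro k _
  have h1 : Set.EqOn (Dop μ k f) (Dop μ k g) (DD lam N) := fun y hy => Dop_congr h hy k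
  exact Dop_congr h1 hx k

lemma Dop_congrF {f g : (Fin N → ℝ) → ℂ} (h : Set.EqOn f g (DD lam N)) (i : Fin N) :
    Set.EqOn (Dop μ i f) (Dop μ i g) (DD lam N) := fun y hy => Dop_congr h hy i

-- T commutes with Dop (on smooth functions).
lemma Top_Dop {f : (Fin N → ℝ) → ℂ} (hf : Sm lam f) {x : Fin N → ℝ}
    (hx : x ∈ DD lam N) (i : Fin N) :
    TDop μ (Dop μ i f) x = Dop μ i (TDop μ f) x := by
  have h1 : ∀ k, Set.EqOn (Dop μ k (Dop μ i f)) (Dop μ i (Dop μ k f)) (DD lam N) :=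
    fun k y hy => Dop_comm hf hy k i
  unfold TDop
  calc ∑ k, Dop μ k (Dop μ k (Dop μ i f)) x
      = ∑ k, Dop μ i (Dop μ k (Dop μ k f)) x := by
        apply Finset.sum_congr rfl
        intro k _
        rw [Dop_congr (h1 k) hx k]
        exact Dop_comm ((hf.D μ k) : Sm lam (Dop μ k f)) hx k i
    _ = Dop μ i (fun y => ∑ k, Dop μ k (Dop μ k f) y) x := by
        rw [Dop_sum (fun k _ => (((hf.D μ k).D μ k)).diffAt hx)]
    _ = _ := rfl
end COMM2

section PROD
variable {lam : ℝ} {μ : Fin N → ℝ}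

def ScC : (Fin N → ℝ) → ℂ := fun x => ∑ k, (x k : ℂ) ^ 2

lemma Sm.Sc : Sm (N := N) lam ScC := by
  apply Sm.sum
  intro k _
  have : (fun x : Fin N → ℝ => (x k : ℂ) ^ 2) = fun x => (x k : ℂ) * (x k : ℂ) := by
    funext x; ring
  rw [this]; exact (Sm.coord k).mul (Sm.coord k)

lemma ScC_flip (i : Fin N) (y : Fin N → ℝ) : ScC (flipC i y) = ScC y := by
  unfold ScC
  apply Finset.sum_congr rfl
  intro k _
  rw [coordC_flipC]
  by_cases h : k = i <;> simp [h] <;> ring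

lemma pd_Sc {x : Fin N → ℝ} (hx : x ∈ DD lam N) (i : Fin N) :
    pdO i ScC x = 2 * (x i : ℂ) := by
  have hrw : ScC = fun y : Fin N → ℝ => ∑ k, (y k : ℂ) * (y k : ℂ) := by
    funext y; unfold ScC; apply Finset.sum_congr rfl; intro k _; ring
  rw [hrw, pd_sum (fun k _ => (((Sm.coord (lam := lam) k)).diffAt hx).fun_mul
    (((Sm.coord (lam := lam) k)).diffAt hx))]
  have : ∀ k, pdO i (fun y : Fin N → ℝ => (y k : ℂ) * (y k : ℂ)) x
      = (if k = i then 2 * (x k : ℂ) else 0) := by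
    intro k
    rw [pd_mul (((Sm.coord (lam := lam) k)).diffAt hx) (((Sm.coord (lam := lam) k)).diffAt hx),
      pd_coord]
    by_cases h : k = i <;> simp [h] <;> ring
  calc ∑ k, pdO i (fun y : Fin N → ℝ => (y k : ℂ) * (y k : ℂ)) x
      = ∑ k, (if k = i then 2 * (x k : ℂ) else 0) :=
        Finset.sum_congr rfl (fun k _ => this k)
    _ = 2 * (x i : ℂ) := by simp

lemma Dop_Sc_mul {g : (Fin N → ℝ) → ℂ} (hg : Sm lam g) {x : Fin N → ℝ}
    (hx : x ∈ DD lam N) (i : Fin N) :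
    Dop μ i (fun y => ScC y * g y) x = 2 * (x i : ℂ) * g x + ScC x * Dop μ i g x := by
  rw [Dop_even_mul ((Sm.Sc (lam := lam)).diffAt hx) (hg.diffAt hx) i (ScC_flip i x),
    pd_Sc hx]

lemma Rop_coord_mul (k j : Fin N) (g : (Fin N → ℝ) → ℂ) (y : Fin N → ℝ) :
    Rop k (fun z => (z j : ℂ) * g z) y
      = (if j = k then (-1:ℂ) else 1) * (y j : ℂ) * Rop k g y := by
  simp only [Rop]
  rw [coordC_flipC]

end PROD

section PROD2
variable {lam : ℝ} {μ : Fin N → ℝ}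

lemma DopDop_coord_coord {g : (Fin N → ℝ) → ℂ} (hg : Sm lam g) {x : Fin N → ℝ}
    (hx : x ∈ DD lam N) (i j k : Fin N) :
    Dop μ k (Dop μ k (fun y => (y i : ℂ) * ((y j : ℂ) * g y))) x
      = (x i : ℂ) * (x j : ℂ) * Dop μ k (Dop μ k g) x
        + (if k = j then 2 * (x i : ℂ) * Dop μ j g x else 0)
        + (if k = i then 2 * (x j : ℂ) * Dop μ i g x else 0)
        + (if k = i ∧ k = j then 2 * g x + 4 * (μ i : ℂ) * Rop i g x else 0) := by
  have hjg : Sm lam (fun y => (y j : ℂ) * g y) := (Sm.coord j).mul hg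
  have hDg : Sm lam (Dop μ k g) := hg.D μ k
  have hRg : Sm lam (Rop k g) := hg.R k
  have hRDg : Sm lam (Rop k (Dop μ k g)) := hDg.R k
  by_cases hki : k = i
  · by_cases hkj : k = j
    · -- k = i = j
      have hij : i = j := hki ▸ hkj
      subst hij; subst hki
      have h1 : Set.EqOn (Dop μ k (fun y => (y k : ℂ) * ((y k : ℂ) * g y)))
          (fun y => (y k : ℂ) * ((y k : ℂ) * Dop μ k g y) + 2 * ((y k : ℂ) * g y))
          (DD lam N) := by
        intro y hy
        rw [Dop_coord_mul hy (hjg.diffAt hy) k k, if_pos rfl,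
          Dop_coord_mul hy (hg.diffAt hy) k k, if_pos rfl, Rop_coord_mul, if_pos rfl]
        ring
      have d1 : DifferentiableAt ℝ (fun y => (y k : ℂ) * ((y k : ℂ) * Dop μ k g y)) x :=
        ((Sm.coord k).mul ((Sm.coord k).mul hDg)).diffAt hx
      have d2 : DifferentiableAt ℝ (fun y => 2 * ((y k : ℂ) * g y)) x :=
        (((Sm.coord k).mul hg).const_mul 2).diffAt hx
      rw [Dop_congr h1 hx k, Dop_add d1 d2,
        Dop_coord_mul hx (((Sm.coord k).mul hDg).diffAt hx) k k, if_pos rfl,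
        Dop_coord_mul hx (hDg.diffAt hx) k k, if_pos rfl,
        Rop_coord_mul, if_pos rfl,
        Dop_const_mul (((Sm.coord k).mul hg).diffAt hx) 2 k,
        Dop_coord_mul hx (hg.diffAt hx) k k, if_pos rfl]
      have hR : Rop k (Dop μ k g) x = - Dop μ k (Rop k g) x := by
        rw [Dop_R hx hg k k, if_pos rfl]; ring
      simp only [hR, eq_self_iff_true, if_true, true_and, and_true, and_self]
      ring
    · -- k = i ≠ j
      subst hki
      have h1 : Set.EqOn (Dop μ k (fun y => (y k : ℂ) * ((y j : ℂ) * g y)))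
          (fun y => (y k : ℂ) * ((y j : ℂ) * Dop μ k g y)
            + ((y j : ℂ) * g y + 2 * (μ k : ℂ) * ((y j : ℂ) * Rop k g y)))
          (DD lam N) := by
        intro y hy
        rw [Dop_coord_mul hy (hjg.diffAt hy) k k, if_pos rfl,
          Dop_coord_mul hy (hg.diffAt hy) k j, if_neg hkj, Rop_coord_mul,
          if_neg (fun hh => hkj hh.symm)]
        ring
      have d1 : DifferentiableAt ℝ (fun y => (y k : ℂ) * ((y j : ℂ) * Dop μ k g y)) x :=
        ((Sm.coord k).mul ((Sm.coord j).mul hDg)).diffAt hx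
      have d2 : DifferentiableAt ℝ (fun y => (y j : ℂ) * g y) x := hjg.diffAt hx
      have d3 : DifferentiableAt ℝ (fun y => 2 * (μ k : ℂ) * ((y j : ℂ) * Rop k g y)) x :=
        (((Sm.coord j).mul hRg).const_mul _).diffAt hx
      rw [Dop_congr h1 hx k, Dop_add d1 (d2.fun_add d3), Dop_add d2 d3,
        Dop_coord_mul hx (((Sm.coord j).mul hDg).diffAt hx) k k, if_pos rfl,
        Dop_coord_mul hx (hDg.diffAt hx) k j, if_neg hkj,
        Rop_coord_mul, if_neg (fun hh => hkj hh.symm),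
        Dop_coord_mul hx (hg.diffAt hx) k j, if_neg hkj,
        Dop_const_mul (((Sm.coord j).mul hRg).diffAt hx) _ k,
        Dop_coord_mul hx (hRg.diffAt hx) k j, if_neg hkj]
      have hR : Dop μ k (Rop k g) x = - Rop k (Dop μ k g) x := by
        rw [Dop_R hx hg k k, if_pos rfl]; ring
      simp only [hR, eq_self_iff_true, if_true, true_and, and_true, if_neg hkj]
      ring
  · by_cases hkj : k = j
    · -- k = j ≠ i
      subst hkj
      have h1 : Set.EqOn (Dop μ k (fun y => (y i : ℂ) * ((y k : ℂ) * g y)))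
          (fun y => (y i : ℂ) * ((y k : ℂ) * Dop μ k g y)
            + ((y i : ℂ) * g y + 2 * (μ k : ℂ) * ((y i : ℂ) * Rop k g y)))
          (DD lam N) := by
        intro y hy
        rw [Dop_coord_mul hy (hjg.diffAt hy) k i, if_neg hki,
          Dop_coord_mul hy (hg.diffAt hy) k k, if_pos rfl]
        ring
      have d1 : DifferentiableAt ℝ (fun y => (y i : ℂ) * ((y k : ℂ) * Dop μ k g y)) x :=
        ((Sm.coord i).mul ((Sm.coord k).mul hDg)).diffAt hx
      have d2 : DifferentiableAt ℝ (fun y => (y i : ℂ) * g y) x :=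
        ((Sm.coord i).mul hg).diffAt hx
      have d3 : DifferentiableAt ℝ (fun y => 2 * (μ k : ℂ) * ((y i : ℂ) * Rop k g y)) x :=
        (((Sm.coord i).mul hRg).const_mul _).diffAt hx
      rw [Dop_congr h1 hx k, Dop_add d1 (d2.fun_add d3), Dop_add d2 d3,
        Dop_coord_mul hx (((Sm.coord k).mul hDg).diffAt hx) k i, if_neg hki,
        Dop_coord_mul hx (hDg.diffAt hx) k k, if_pos rfl,
        Dop_coord_mul hx (hg.diffAt hx) k i, if_neg hki,
        Dop_const_mul (((Sm.coord i).mul hRg).diffAt hx) _ k,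
        Dop_coord_mul hx (hRg.diffAt hx) k i, if_neg hki]
      have hR : Dop μ k (Rop k g) x = - Rop k (Dop μ k g) x := by
        rw [Dop_R hx hg k k, if_pos rfl]; ring
      simp only [hR, eq_self_iff_true, if_true, true_and, and_true, if_neg hki]
      ring
    · -- k ∉ {i, j}
      have h1 : Set.EqOn (Dop μ k (fun y => (y i : ℂ) * ((y j : ℂ) * g y)))
          (fun y => (y i : ℂ) * ((y j : ℂ) * Dop μ k g y)) (DD lam N) := by
        intro y hy
        rw [Dop_coord_mul hy (hjg.diffAt hy) k i, if_neg hki,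
          Dop_coord_mul hy (hg.diffAt hy) k j, if_neg hkj]
        ring
      rw [Dop_congr h1 hx k,
        Dop_coord_mul hx (((Sm.coord j).mul hDg).diffAt hx) k i, if_neg hki,
        Dop_coord_mul hx (hDg.diffAt hx) k j, if_neg hkj]
      rw [if_neg hki, if_neg hkj, if_neg (show ¬(k = i ∧ k = j) from fun h => hki h.1)]
      ring

lemma TDop_coord_coord {g : (Fin N → ℝ) → ℂ} (hg : Sm lam g) {x : Fin N → ℝ}
    (hx : x ∈ DD lam N) (i j : Fin N) :
    TDop μ (fun y => (y i : ℂ) * ((y j : ℂ) * g y)) x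
      = (x i : ℂ) * (x j : ℂ) * TDop μ g x
        + 2 * (x j : ℂ) * Dop μ i g x + 2 * (x i : ℂ) * Dop μ j g x
        + (if i = j then 2 * g x + 4 * (μ i : ℂ) * Rop i g x else 0) := by
  unfold TDop
  rw [Finset.sum_congr rfl (fun k _ => DopDop_coord_coord hg hx i j k)]
  rw [Finset.sum_add_distrib, Finset.sum_add_distrib, Finset.sum_add_distrib]
  have e1 : ∑ k, (x i : ℂ) * (x j : ℂ) * Dop μ k (Dop μ k g) x
      = (x i : ℂ) * (x j : ℂ) * ∑ k, Dop μ k (Dop μ k g) x := by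
    rw [← Finset.mul_sum]
  have e2 : ∑ k, (if k = j then 2 * (x i : ℂ) * Dop μ j g x else 0)
      = 2 * (x i : ℂ) * Dop μ j g x := by simp
  have e3 : ∑ k, (if k = i then 2 * (x j : ℂ) * Dop μ i g x else 0)
      = 2 * (x j : ℂ) * Dop μ i g x := by simp
  have e4 : ∑ k, (if k = i ∧ k = j then 2 * g x + 4 * (μ i : ℂ) * Rop i g x else 0)
      = (if i = j then 2 * g x + 4 * (μ i : ℂ) * Rop i g x else 0) := by
    by_cases h : i = j
    · subst h; simp
    · rw [if_neg h]
      apply Finset.sum_eq_zero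
      intro k _
      rw [if_neg]
      rintro ⟨rfl, rfl⟩
      exact h rfl
  rw [e1, e2, e3, e4]
  ring

lemma DopDop_Sc_mul {g : (Fin N → ℝ) → ℂ} (hg : Sm lam g) {x : Fin N → ℝ}
    (hx : x ∈ DD lam N) (i j : Fin N) :
    Dop μ i (Dop μ j (fun y => ScC y * g y)) x
      = 2 * (x j : ℂ) * Dop μ i g x + 2 * (x i : ℂ) * Dop μ j g x
        + ScC x * Dop μ i (Dop μ j g) x
        + (if i = j then 2 * g x + 4 * (μ i : ℂ) * Rop i g x else 0) := by
  have hDg : Sm lam (Dop μ j g) := hg.D μ j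
  have h1 : Set.EqOn (Dop μ j (fun y => ScC y * g y))
      (fun y => 2 * ((y j : ℂ) * g y) + ScC y * Dop μ j g y) (DD lam N) := by
    intro y hy
    rw [Dop_Sc_mul hg hy j]; ring
  have d1 : DifferentiableAt ℝ (fun y => 2 * ((y j : ℂ) * g y)) x :=
    (((Sm.coord j).mul hg).const_mul 2).diffAt hx
  have d2 : DifferentiableAt ℝ (fun y => ScC y * Dop μ j g y) x :=
    ((Sm.Sc).mul hDg).diffAt hx
  rw [Dop_congr h1 hx i, Dop_add d1 d2,
    Dop_const_mul (((Sm.coord j).mul hg).diffAt hx) 2 i,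
    Dop_coord_mul hx (hg.diffAt hx) i j,
    Dop_Sc_mul hDg hx i]
  by_cases h : i = j
  · subst h
    simp only [eq_self_iff_true, if_true]
    ring
  · simp only [if_neg h]; ring

end PROD2

section BRIDGE
variable {lam : ℝ} {μ : Fin N → ℝ} {hb ω : ℝ}

lemma nzDD {x : Fin N → ℝ} (hx : x ∈ DD lam N) :
    (1 : ℂ) + (lam : ℂ) * ScC x ≠ 0 := by
  have : ((1 + lam * ∑ i, (x i) ^ 2 : ℝ) : ℂ) ≠ 0 :=
    Complex.ofReal_ne_zero.mpr hx.2
  convert this using 1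
  unfold ScC
  push_cast
  ring

-- linearity helpers
lemma Dop_add_fun {f g : (Fin N → ℝ) → ℂ} (hf : Sm lam f) (hg : Sm lam g) (i : Fin N) :
    Set.EqOn (Dop μ i (fun y => f y + g y))
      (fun y => Dop μ i f y + Dop μ i g y) (DD lam N) :=
  fun y hy => Dop_add (hf.diffAt hy) (hg.diffAt hy) i

lemma Dop_const_mul_fun {f : (Fin N → ℝ) → ℂ} (hf : Sm lam f) (c : ℂ) (i : Fin N) :
    Set.EqOn (Dop μ i (fun y => c * f y))
      (fun y => c * Dop μ i f y) (DD lam N) :=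
  fun y hy => Dop_const_mul (hf.diffAt hy) c i

lemma DopDop_add {f g : (Fin N → ℝ) → ℂ} (hf : Sm lam f) (hg : Sm lam g)
    {x : Fin N → ℝ} (hx : x ∈ DD lam N) (i j : Fin N) :
    Dop μ i (Dop μ j (fun y => f y + g y)) x
      = Dop μ i (Dop μ j f) x + Dop μ i (Dop μ j g) x := by
  rw [Dop_congr (Dop_add_fun hf hg j) hx i]
  exact Dop_add ((hf.D μ j).diffAt hx) ((hg.D μ j).diffAt hx) i

lemma DopDop_const_mul {f : (Fin N → ℝ) → ℂ} (hf : Sm lam f) (c : ℂ)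
    {x : Fin N → ℝ} (hx : x ∈ DD lam N) (i j : Fin N) :
    Dop μ i (Dop μ j (fun y => c * f y)) x = c * Dop μ i (Dop μ j f) x := by
  rw [Dop_congr (Dop_const_mul_fun hf c j) hx i]
  exact Dop_const_mul ((hf.D μ j).diffAt hx) c i

lemma TDop_add {f g : (Fin N → ℝ) → ℂ} (hf : Sm lam f) (hg : Sm lam g)
    {x : Fin N → ℝ} (hx : x ∈ DD lam N) :
    TDop μ (fun y => f y + g y) x = TDop μ f x + TDop μ g x := by
  unfold TDop
  rw [Finset.sum_congr rfl (fun k _ => DopDop_add hf hg hx k k),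
    Finset.sum_add_distrib]

lemma TDop_const_mul {f : (Fin N → ℝ) → ℂ} (hf : Sm lam f) (c : ℂ)
    {x : Fin N → ℝ} (hx : x ∈ DD lam N) :
    TDop μ (fun y => c * f y) x = c * TDop μ f x := by
  unfold TDop
  rw [Finset.sum_congr rfl (fun k _ => DopDop_const_mul hf c hx k k),
    ← Finset.mul_sum]

-- Pop in terms of Dop
lemma PopPop_eq {f : (Fin N → ℝ) → ℂ} (hf : Sm lam f) {x : Fin N → ℝ}
    (hx : x ∈ DD lam N) (i j : Fin N) :
    Pop μ hb i (Pop μ hb j f) x = -(hb : ℂ)^2 * Dop μ i (Dop μ j f) x := by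
  have : Pop μ hb j f = fun y => -(Complex.I * (hb:ℂ)) * Dop μ j f y := rfl
  rw [show Pop μ hb i (Pop μ hb j f) x
      = -(Complex.I * (hb:ℂ)) * Dop μ i (Pop μ hb j f) x from rfl, this,
    Dop_const_mul ((hf.D μ j).diffAt hx) _ i]
  have hI : Complex.I * Complex.I = -1 := by
    rw [← Complex.I_sq]; ring
  ring_nf
  rw [Complex.I_sq]
  ring

lemma Sm.Hd {f : (Fin N → ℝ) → ℂ} (hf : Sm lam f) :
    Sm (N := N) lam (Hdar μ hb lam ω f) := by
  unfold Hdar Pop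
  apply Sm.mul
  · have h1 : Sm (N := N) lam (fun x => 1 + (lam:ℂ) * ScC x) :=
      (Sm.const 1).add ((Sm.Sc).const_mul (lam:ℂ))
    have h2 : Sm (N := N) lam (fun x => (1 + (lam:ℂ) * ScC x)⁻¹) :=
      ContDiffOn.inv h1 (fun y hy => nzDD hy)
    have : (fun x : Fin N → ℝ => 1 / (1 + (lam:ℂ) * ∑ i, (x i : ℂ)^2))
        = fun x => (1 + (lam:ℂ) * ScC x)⁻¹ := by
      funext y; rw [one_div]; rfl
    rw [this]
    exact h2
  · apply Sm.add
    · apply Sm.const_mul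
      apply Sm.sum
      intro k _
      exact (((hf.D μ k).const_mul _).D μ k).const_mul _
    · have : (fun x : Fin N → ℝ => (ω:ℂ)^2/2 * (∑ i, (x i : ℂ)^2) * f x)
          = fun x => ((ω:ℂ)^2/2 * ScC x) * f x := rfl
      rw [this]
      exact ((Sm.Sc.const_mul _)).mul hf

lemma Hdar_eq {f : (Fin N → ℝ) → ℂ} (hf : Sm lam f) {x : Fin N → ℝ}
    (hx : x ∈ DD lam N) :
    Hdar μ hb lam ω f x
      = (1 + (lam:ℂ) * ScC x)⁻¹ *
          (-(hb:ℂ)^2/2 * TDop μ f x + (ω:ℂ)^2/2 * (ScC x * f x)) := by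
  unfold Hdar
  rw [Finset.sum_congr rfl (fun k _ => PopPop_eq hf hx k k), ← Finset.mul_sum]
  rw [one_div]
  unfold TDop ScC
  ring

lemma Sm.DF {f : (Fin N → ℝ) → ℂ} (hf : Sm lam f) (i j : Fin N) :
    Sm (N := N) lam (DFdar μ hb lam ω i j f) := by
  unfold DFdar Pop
  apply Sm.add
  · exact (((hf.D μ j).const_mul _).D μ i).const_mul _
  · have : (fun x : Fin N → ℝ => (x i : ℂ) * (x j : ℂ) *
        ((ω:ℂ)^2 * f x - 2 * (lam:ℂ) * Hdar μ hb lam ω f x))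
        = fun x => ((fun y : Fin N → ℝ => (y i : ℂ) * (y j : ℂ)) x) *
          ((fun y => (ω:ℂ)^2 * f y - 2 * (lam:ℂ) * Hdar μ hb lam ω f y) x) := rfl
    rw [this]
    exact ((Sm.coord i).mul (Sm.coord j)).mul
      ((hf.const_mul _).sub ((hf.Hd).const_mul _))

end BRIDGE


set_option maxHeartbeats 2000000

/-- For the Dunkl–Darboux III system, `[Ĥ^{(λ)}, F̂ᵢⱼ^{(λ)}] = 0` and
`Ĥ^{(λ)} = (1/2) Σᵢ F̂ᵢᵢ^{(λ)}`. -/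
theorem dunkl_darboux_III (N : ℕ) (hN : 1 ≤ N) (μ : Fin N → ℝ)
    (hb lam ω : ℝ) (hbpos : hb > 0)
    (f : (Fin N → ℝ) → ℂ)
    (hf : ContDiffOn ℝ (⊤ : ℕ∞) f {x | (∀ i, x i ≠ 0) ∧ 1 + lam * ∑ i, (x i) ^ 2 ≠ 0}) :
    ∀ x : Fin N → ℝ, (∀ i, x i ≠ 0) → 1 + lam * ∑ i, (x i) ^ 2 ≠ 0 →
      (∀ i j : Fin N,
        Hdar μ hb lam ω (DFdar μ hb lam ω i j f) x
          = DFdar μ hb lam ω i j (Hdar μ hb lam ω f) x) ∧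
      Hdar μ hb lam ω f x = (1 / 2 : ℂ) * ∑ i, DFdar μ hb lam ω i i f x := by
  intro x hx1 hx2
  have hx : x ∈ DD lam N := ⟨hx1, hx2⟩
  have hf' : Sm lam f := hf
  have hc2 : ((hb:ℂ))^2 ≠ 0 :=
    pow_ne_zero _ (Complex.ofReal_ne_zero.mpr (ne_of_gt hbpos))
  have hnz : (1 : ℂ) + (lam : ℂ) * ScC x ≠ 0 := nzDD hx
  have hSmh : Sm lam (Hdar μ hb lam ω f) := hf'.Hd
  constructor
  · intro i j
    -- PART 1
    have hSmDDf : Sm lam (Dop μ i (Dop μ j f)) := (hf'.D μ j).D μ i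
    have hSmG : Sm lam (fun y => (ω:ℂ)^2 * f y + (-2*(lam:ℂ)) * Hdar μ hb lam ω f y) :=
      (hf'.const_mul _).add (hSmh.const_mul _)
    have hSmA : Sm lam (fun y => -(hb:ℂ)^2 * Dop μ i (Dop μ j f) y) :=
      hSmDDf.const_mul _
    have hSmPhi : Sm lam (fun y => (y i : ℂ) * ((y j : ℂ) *
        ((ω:ℂ)^2 * f y + (-2*(lam:ℂ)) * Hdar μ hb lam ω f y))) :=
      (Sm.coord i).mul ((Sm.coord j).mul hSmG)
    have dfeq : Set.EqOn (DFdar μ hb lam ω i j f)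
        (fun y => -(hb:ℂ)^2 * Dop μ i (Dop μ j f) y
          + (y i : ℂ) * ((y j : ℂ) *
            ((ω:ℂ)^2 * f y + (-2*(lam:ℂ)) * Hdar μ hb lam ω f y))) (DD lam N) := by
      intro y hy
      unfold DFdar
      rw [PopPop_eq hf' hy i j]
      ring
    have hstarm : Set.EqOn (fun y => (hb:ℂ)^2 * TDop μ f y)
        (fun y => -2 * Hdar μ hb lam ω f y
          + (-2*(lam:ℂ)) * (ScC y * Hdar μ hb lam ω f y)
          + (ω:ℂ)^2 * (ScC y * f y)) (DD lam N) := by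
      intro y hy
      have e' : (1 + (lam:ℂ)*ScC y) * Hdar μ hb lam ω f y
          = -(hb:ℂ)^2/2 * TDop μ f y + (ω:ℂ)^2/2 * (ScC y * f y) := by
        rw [Hdar_eq hf' hy, ← mul_assoc, mul_inv_cancel₀ (nzDD hy), one_mul]
      show (hb:ℂ)^2 * TDop μ f y = _
      linear_combination (2:ℂ) * e'
    have s1 : TDop μ (Dop μ i (Dop μ j f)) x = Dop μ i (Dop μ j (TDop μ f)) x := by
      rw [Top_Dop (hf'.D μ j) hx i]
      exact Dop_congr (fun y hy => Top_Dop hf' hy j) hx i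
    have s2m : (hb:ℂ)^2 * Dop μ i (Dop μ j (TDop μ f)) x
        = -2 * Dop μ i (Dop μ j (Hdar μ hb lam ω f)) x
          + (-2*(lam:ℂ)) * (2*(x j:ℂ)*Dop μ i (Hdar μ hb lam ω f) x
              + 2*(x i:ℂ)*Dop μ j (Hdar μ hb lam ω f) x
              + ScC x * Dop μ i (Dop μ j (Hdar μ hb lam ω f)) x
              + (if i = j then 2*Hdar μ hb lam ω f x
                  + 4*(μ i:ℂ)*Rop i (Hdar μ hb lam ω f) x else 0))
          + (ω:ℂ)^2 * (2*(x j:ℂ)*Dop μ i f x + 2*(x i:ℂ)*Dop μ j f x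
              + ScC x * Dop μ i (Dop μ j f) x
              + (if i = j then 2*f x + 4*(μ i:ℂ)*Rop i f x else 0)) := by
      have e0 : (hb:ℂ)^2 * Dop μ i (Dop μ j (TDop μ f)) x
          = Dop μ i (Dop μ j (fun y => (hb:ℂ)^2 * TDop μ f y)) x := by
        rw [DopDop_const_mul (hf'.T μ) _ hx i j]
      rw [e0, Dop_congr (Dop_congrF hstarm j) hx i,
        DopDop_add ((hSmh.const_mul _).add ((Sm.Sc.mul hSmh).const_mul _))
          ((Sm.Sc.mul hf').const_mul _) hx i j,
        DopDop_add (hSmh.const_mul _) ((Sm.Sc.mul hSmh).const_mul _) hx i j,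
        DopDop_const_mul hSmh _ hx i j, DopDop_const_mul (Sm.Sc.mul hSmh) _ hx i j,
        DopDop_const_mul (Sm.Sc.mul hf') _ hx i j,
        DopDop_Sc_mul hSmh hx i j, DopDop_Sc_mul hf' hx i j]
    have s5 : TDop μ (fun y => (ω:ℂ)^2 * f y + (-2*(lam:ℂ)) * Hdar μ hb lam ω f y) x
        = (ω:ℂ)^2 * TDop μ f x + (-2*(lam:ℂ)) * TDop μ (Hdar μ hb lam ω f) x := by
      rw [TDop_add (hf'.const_mul _) (hSmh.const_mul _) hx,
        TDop_const_mul hf' _ hx, TDop_const_mul hSmh _ hx]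
    have s6 : ∀ k, Dop μ k (fun y => (ω:ℂ)^2 * f y
          + (-2*(lam:ℂ)) * Hdar μ hb lam ω f y) x
        = (ω:ℂ)^2 * Dop μ k f x + (-2*(lam:ℂ)) * Dop μ k (Hdar μ hb lam ω f) x := by
      intro k
      rw [Dop_add ((hf'.const_mul _).diffAt hx) ((hSmh.const_mul _).diffAt hx) k,
        Dop_const_mul (hf'.diffAt hx) _ k, Dop_const_mul (hSmh.diffAt hx) _ k]
    have rhs2 : DFdar μ hb lam ω i j (Hdar μ hb lam ω f) x
        = -(hb:ℂ)^2 * Dop μ i (Dop μ j (Hdar μ hb lam ω f)) x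
          + (x i:ℂ)*(x j:ℂ)*((ω:ℂ)^2*Hdar μ hb lam ω f x
             - 2*(lam:ℂ)*Hdar μ hb lam ω (Hdar μ hb lam ω f) x) := by
      unfold DFdar; rw [PopPop_eq hSmh hx i j]
    have heqh : (1 + (lam:ℂ)*ScC x) * Hdar μ hb lam ω (Hdar μ hb lam ω f) x
        = -(hb:ℂ)^2/2 * TDop μ (Hdar μ hb lam ω f) x
          + (ω:ℂ)^2/2 * (ScC x * Hdar μ hb lam ω f x) := by
      rw [Hdar_eq hSmh hx, ← mul_assoc, mul_inv_cancel₀ (nzDD hx), one_mul]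
    have hstx : (hb:ℂ)^2 * TDop μ f x
        = -2 * Hdar μ hb lam ω f x + (-2*(lam:ℂ)) * (ScC x * Hdar μ hb lam ω f x)
          + (ω:ℂ)^2 * (ScC x * f x) := hstarm hx
    have lhseq : (1 + (lam:ℂ)*ScC x) * Hdar μ hb lam ω (DFdar μ hb lam ω i j f) x
        = -(hb:ℂ)^2/2 * TDop μ (DFdar μ hb lam ω i j f) x
          + (ω:ℂ)^2/2 * (ScC x * DFdar μ hb lam ω i j f x) := by
      rw [Hdar_eq (hf'.DF i j) hx, ← mul_assoc, mul_inv_cancel₀ (nzDD hx), one_mul]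
    have hRG : Rop i (fun y => (ω:ℂ)^2 * f y
          + (-2*(lam:ℂ)) * Hdar μ hb lam ω f y) x
        = (ω:ℂ)^2 * Rop i f x + (-2*(lam:ℂ)) * Rop i (Hdar μ hb lam ω f) x := rfl
    apply mul_left_cancel₀ hnz
    rw [lhseq, Top_congr dfeq hx, TDop_add hSmA hSmPhi hx,
      TDop_const_mul hSmDDf _ hx, s1,
      TDop_coord_coord hSmG hx i j, s5, s6 i, s6 j, dfeq hx, rhs2]
    by_cases hij : i = j
    · subst hij
      simp only [eq_self_iff_true, if_true, hRG] at s2m ⊢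
      linear_combination ((hb:ℂ)^2/2) * s2m
        + (-(ω:ℂ)^2*(x i:ℂ)*(x i:ℂ)/2) * hstx
        + (2*(lam:ℂ)*(x i:ℂ)*(x i:ℂ)) * heqh
    · simp only [if_neg hij] at s2m ⊢
      linear_combination ((hb:ℂ)^2/2) * s2m
        + (-(ω:ℂ)^2*(x i:ℂ)*(x j:ℂ)/2) * hstx
        + (2*(lam:ℂ)*(x i:ℂ)*(x j:ℂ)) * heqh
  · have e1 : ∀ k : Fin N, DFdar μ hb lam ω k k f x
        = -(hb:ℂ)^2 * Dop μ k (Dop μ k f) x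
          + (x k:ℂ)*(x k:ℂ) * ((ω:ℂ)^2 * f x - 2*(lam:ℂ)*Hdar μ hb lam ω f x) := by
      intro k; unfold DFdar; rw [PopPop_eq hf' hx k k]
    rw [Finset.sum_congr rfl (fun k _ => e1 k), Finset.sum_add_distrib,
      ← Finset.mul_sum, ← Finset.sum_mul]
    have e2 : ∑ k, (x k:ℂ)*(x k:ℂ) = ScC x := by
      unfold ScC; exact Finset.sum_congr rfl (fun k _ => by ring)
    have e3 : ∑ k, Dop μ k (Dop μ k f) x = TDop μ f x := rfl
    rw [e2, e3, Hdar_eq hf' hx]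
    field_simp
    ring

end
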